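/- arXiv:1712.02167 — 2 statements merged into one kernel-verified Lean document; each statement's English description precedes it below -/
import Mathlib

section
/- Let γ ≥ 1 be a real number (or rational) and let n₁, n₂, t₁, t₂ be natural numbers with t₁ < n₁, t₂ < n₂, n₁ = γ·n₂ and t₁ > γ·t₂, and set t = t₁ + t₂. Then for every natural number i with t₁ + 1 ≤ i < t, i < n₁ and t − i ≤ n₂, one has the strict inequality C(n₁, i) · C(n₂, t − i) > C(n₁, i+1) · C(n₂, t − i − 1). In probabilistic terms: if x is uniform on the weight-t vectors of 𝔽₂^(n₁+n₂), then Pr(wt(x₁) = i) > Pr(wt(x₁) = i+1) for all i ≥ t₁ + 1. -/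
/-- If `n₁ = γ n₂` and `t₁ > γ t₂` for a real `γ ≥ 1`, then for every `i ≥ t₁ + 1`
(with `i < t`, `i < n₁`, `t - i ≤ n₂`, where `t = t₁ + t₂`) the hypergeometric counts
are strictly decreasing: `C(n₁,i)C(n₂,t-i) > C(n₁,i+1)C(n₂,t-i-1)`, i.e. under the
uniform distribution on weight-`t` vectors, `Pr(wt(x₁) = i) > Pr(wt(x₁) = i+1)`. -/
theorem counts_strictly_decreasing (γ : ℝ) (hγ : 1 ≤ γ) (n₁ n₂ t₁ t₂ : ℕ)
    (ht₁ : t₁ < n₁) (ht₂ : t₂ < n₂)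
    (hn : (n₁ : ℝ) = γ * n₂) (ht : (t₁ : ℝ) > γ * t₂)
    (i : ℕ) (hi₁ : t₁ + 1 ≤ i) (hi₂ : i < t₁ + t₂) (hi₃ : i < n₁)
    (hi₄ : t₁ + t₂ - i ≤ n₂) :
    n₁.choose i * n₂.choose (t₁ + t₂ - i)
      > n₁.choose (i + 1) * n₂.choose (t₁ + t₂ - i - 1) := by
  set s := t₁ + t₂ - i with hs
  have hs1 : 1 ≤ s := by omega
  obtain ⟨j, hj⟩ : ∃ j, s = j + 1 := ⟨s - 1, by omega⟩
  -- s + 1 ≤ t₂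
  have hst : s + 1 ≤ t₂ := by omega
  -- key real inequality converted to nat
  have key : (n₁ - i) * s < (i + 1) * (n₂ - j) := by
    have h1 : ((n₁ - i : ℕ) : ℝ) = (n₁ : ℝ) - i := by
      push_cast [Nat.cast_sub hi₃.le]; ring
    have h2 : ((n₂ - j : ℕ) : ℝ) = (n₂ : ℝ) - j := by
      have : j ≤ n₂ := by omega
      push_cast [Nat.cast_sub this]; ring
    have hsj : (s : ℝ) = (j : ℝ) + 1 := by exact_mod_cast congrArg Nat.cast hj
    have hstR : (s : ℝ) + 1 ≤ (t₂ : ℝ) := by exact_mod_cast hst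
    have hiR : (t₁ : ℝ) + 1 ≤ (i : ℝ) := by exact_mod_cast hi₁
    have ht₂R : (t₂ : ℝ) < (n₂ : ℝ) := by exact_mod_cast ht₂
    have hsR1 : (1 : ℝ) ≤ (s : ℝ) := by exact_mod_cast hs1
    rw [← Nat.cast_lt (α := ℝ)]
    push_cast [h1, h2]
    -- i + 1 > γ (s+1), since i ≥ t₁+1 > γ t₂ + 1 ≥ γ(s+1) + 1
    have hA : γ * ((s : ℝ) + 1) < (i : ℝ) + 1 := by nlinarith
    have hB : (0 : ℝ) < (n₂ : ℝ) - (s : ℝ) + 1 := by nlinarith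
    nlinarith [mul_lt_mul_of_pos_right hA hB, mul_pos (lt_of_lt_of_le zero_lt_one hγ) hB,
      mul_nonneg (le_of_lt (lt_of_lt_of_le zero_lt_one hγ)) (le_trans zero_le_one hsR1)]
  have base_pos : 0 < n₁.choose i * n₂.choose s :=
    Nat.mul_pos (Nat.choose_pos hi₃.le) (Nat.choose_pos hi₄)
  have M_pos : 0 < (i + 1) * (n₂ - j) := by
    have hjn : j < n₂ := by omega
    exact Nat.mul_pos (Nat.succ_pos i) (by omega)
  have e1 : n₁.choose (i + 1) * (i + 1) = n₁.choose i * (n₁ - i) :=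
    Nat.choose_succ_right_eq n₁ i
  have e2 : n₂.choose s * s = n₂.choose j * (n₂ - j) := by
    rw [hj]; exact Nat.choose_succ_right_eq n₂ j
  have hsj' : s - 1 = j := by omega
  have eq1 : n₁.choose (i + 1) * n₂.choose (s - 1) * ((i + 1) * (n₂ - j))
      = n₁.choose i * n₂.choose s * ((n₁ - i) * s) := by
    rw [hsj']
    calc n₁.choose (i + 1) * n₂.choose j * ((i + 1) * (n₂ - j))
        = (n₁.choose (i + 1) * (i + 1)) * (n₂.choose j * (n₂ - j)) := by ring
      _ = (n₁.choose i * (n₁ - i)) * (n₂.choose s * s) := by rw [e1, e2]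
      _ = n₁.choose i * n₂.choose s * ((n₁ - i) * s) := by ring
  have lt1 : n₁.choose (i + 1) * n₂.choose (s - 1) * ((i + 1) * (n₂ - j))
      < n₁.choose i * n₂.choose s * ((i + 1) * (n₂ - j)) := by
    rw [eq1]
    exact mul_lt_mul_of_pos_left key base_pos
  exact Nat.lt_of_mul_lt_mul_right lt1
end

section
/- (Proposition 1.) Let k, n₁, n₂ be natural numbers with k < n₁ and k < n₂. Let G₁ ∈ 𝔽₂^{k×n₁} and G₂ ∈ 𝔽₂^{k×n₂}, let H₁ ∈ 𝔽₂^{(n₁−k)×n₁} satisfy H₁·G₁ᵀ = 0, let H₂ ∈ 𝔽₂^{(n₂−k)×n₂} satisfy H₂·G₂ᵀ = 0, and let A ∈ 𝔽₂^{k×n₁}, B ∈ 𝔽₂^{k×n₂} satisfy G₁·Aᵀ + G₂·Bᵀ = 0. Let S ∈ 𝔽₂^{k×k} be invertible and let P be an (n₁+n₂)×(n₁+n₂) permutation matrix. Then the matrix H′ = [[H₁, 0], [0, H₂], [A, B]] · P (the vertical juxtaposition of the block rows (H₁ | 0), (0 | H₂) and (A | B), multiplied on the right by P) satisfies H′ ·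 G_pubᵀ = 0, where G_pub = S · (G₁ | G₂) · P; that is, every row of H′ lies in the dual code of the code generated by the rows of G_pub. -/
/-!
Since `P * Pᵀ = 1`, the permutation cancels and `H′ · G_pubᵀ = H · (G₁ | G₂)ᵀ · Sᵀ` with `H` the
unpermuted block matrix. Computed blockwise, `H · (G₁ | G₂)ᵀ` has the blocks `H₁ G₁ᵀ`, `H₂ G₂ᵀ` and
`A G₁ᵀ + B G₂ᵀ = (G₁ Aᵀ + G₂ Bᵀ)ᵀ`, all zero.
-/

open Matrix

theorem Matrix.permMatrix_mul_transpose_self {n R : Type*} [DecidableEq n] [Fintype n]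
    [NonAssocSemiring R] (σ : Equiv.Perm n) : σ.permMatrix R * (σ.permMatrix R)ᵀ = 1 := by
  rw [transpose_permMatrix, ← permMatrix_mul, inv_mul_cancel, permMatrix_one]

section

variable {R : Type*} [CommSemiring R]

theorem Matrix.mul_mul_transpose_eq_zero_of_mul_transpose_eq_zero {l k k' n : Type*}
    [Fintype n] [DecidableEq n] [Fintype k] {H : Matrix l n R} {G : Matrix k n R}
    (S : Matrix k' k R) {P : Matrix n n R}
    (hP : P * Pᵀ = 1) (hHG : H * Gᵀ = 0) : H * P * (S * G * P)ᵀ = 0 := by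
  rw [transpose_mul, transpose_mul, Matrix.mul_assoc, ← Matrix.mul_assoc P, hP, Matrix.one_mul,
    ← Matrix.mul_assoc, hHG, Matrix.zero_mul]

theorem Matrix.fromRows_fromCols_mul_transpose_fromCols_eq_zero
    {k r₁ r₂ n₁ n₂ : Type*} [Fintype n₁] [Fintype n₂]
    {G₁ : Matrix k n₁ R} {G₂ : Matrix k n₂ R} {H₁ : Matrix r₁ n₁ R} {H₂ : Matrix r₂ n₂ R}
    {A : Matrix k n₁ R} {B : Matrix k n₂ R}
    (hH₁ : H₁ * G₁ᵀ = 0) (hH₂ : H₂ * G₂ᵀ = 0) (hAB : A * G₁ᵀ + B * G₂ᵀ = 0) :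
    fromRows (fromRows (fromCols H₁ 0) (fromCols 0 H₂)) (fromCols A B) * (fromCols G₁ G₂)ᵀ
      = 0 := by
  rw [transpose_fromCols, fromRows_mul, fromRows_mul, fromCols_mul_fromRows,
    fromCols_mul_fromRows, fromCols_mul_fromRows, hH₁, hH₂, hAB]
  simp only [Matrix.zero_mul, add_zero, fromRows_zero]

end

theorem parity_check_of_public_code_general (k n₁ n₂ : ℕ)
    (G₁ : Matrix (Fin k) (Fin n₁) (ZMod 2)) (G₂ : Matrix (Fin k) (Fin n₂) (ZMod 2))
    (H₁ : Matrix (Fin (n₁ - k)) (Fin n₁) (ZMod 2))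
    (H₂ : Matrix (Fin (n₂ - k)) (Fin n₂) (ZMod 2))
    (A : Matrix (Fin k) (Fin n₁) (ZMod 2)) (B : Matrix (Fin k) (Fin n₂) (ZMod 2))
    (hH₁ : H₁ * G₁ᵀ = 0) (hH₂ : H₂ * G₂ᵀ = 0) (hAB : G₁ * Aᵀ + G₂ * Bᵀ = 0)
    (S : Matrix (Fin k) (Fin k) (ZMod 2))
    (P : Matrix (Fin n₁ ⊕ Fin n₂) (Fin n₁ ⊕ Fin n₂) (ZMod 2))
    (hP : ∃ σ : Equiv.Perm (Fin n₁ ⊕ Fin n₂), P = σ.permMatrix (ZMod 2)) :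
    (fromRows (fromRows (fromCols H₁ 0) (fromCols 0 H₂)) (fromCols A B) * P)
      * (S * fromCols G₁ G₂ * P)ᵀ = 0 := by
  obtain ⟨σ, rfl⟩ := hP
  have hAB' : A * G₁ᵀ + B * G₂ᵀ = 0 := by
    simpa only [transpose_add, transpose_mul, transpose_transpose, transpose_zero]
      using congrArg transpose hAB
  exact mul_mul_transpose_eq_zero_of_mul_transpose_eq_zero S (permMatrix_mul_transpose_self σ)
    (fromRows_fromCols_mul_transpose_fromCols_eq_zero hH₁ hH₂ hAB')

/-- Proposition 1: the vertical juxtaposition of the block rows `(H₁ | 0)`, `(0 | H₂)` and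
`(A | B)`, multiplied on the right by the permutation matrix `P`, is a parity-check matrix
of the public code generated by `G_pub = S·(G₁ | G₂)·P`, i.e. `H′ · G_pubᵀ = 0`. -/
theorem parity_check_of_public_code (k n₁ n₂ : ℕ) (hk₁ : k < n₁) (hk₂ : k < n₂)
    (G₁ : Matrix (Fin k) (Fin n₁) (ZMod 2)) (G₂ : Matrix (Fin k) (Fin n₂) (ZMod 2))
    (H₁ : Matrix (Fin (n₁ - k)) (Fin n₁) (ZMod 2))
    (H₂ : Matrix (Fin (n₂ - k)) (Fin n₂) (ZMod 2))
    (A : Matrix (Fin k) (Fin n₁) (ZMod 2)) (B : Matrix (Fin k) (Fin n₂) (ZMod 2))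
    (hH₁ : H₁ * G₁ᵀ = 0) (hH₂ : H₂ * G₂ᵀ = 0) (hAB : G₁ * Aᵀ + G₂ * Bᵀ = 0)
    (S : Matrix (Fin k) (Fin k) (ZMod 2)) (hS : IsUnit S)
    (P : Matrix (Fin n₁ ⊕ Fin n₂) (Fin n₁ ⊕ Fin n₂) (ZMod 2))
    (hP : ∃ σ : Equiv.Perm (Fin n₁ ⊕ Fin n₂), P = σ.permMatrix (ZMod 2)) :
    (fromRows (fromRows (fromCols H₁ 0) (fromCols 0 H₂)) (fromCols A B) * P)
      * (S * fromCols G₁ G₂ * P)ᵀ = 0 :=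
  parity_check_of_public_code_general k n₁ n₂ G₁ G₂ H₁ H₂ A B hH₁ hH₂ hAB S P hP
end
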